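/- For every n ≥ 1, the iterated simplex integral ∫_{0 < r_n < ··· < r_1 < 1} dr_1···dr_n / sqrt((1-r_1)(r_1-r_2)···(r_{n-1}-r_n)·r_n) equals Γ(1/2)^{n+1} / Γ((n+1)/2). -/

import Mathlib

open Real MeasureTheory Set Finset

lemma beta_real {s t : ℝ} (hs : 0 < s) (ht : 0 < t) :
    IntegrableOn (fun x : ℝ => x ^ (s-1) * (1-x) ^ (t-1)) (Ioo 0 1) ∧
    ∫ x in Ioo (0:ℝ) 1, x ^ (s-1) * (1-x) ^ (t-1) = Gamma s * Gamma t / Gamma (s+t) := by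
  have hC : IntervalIntegrable (fun x : ℝ => (x:ℂ) ^ ((s:ℂ)-1) * ((1:ℂ)-x) ^ ((t:ℂ)-1))
      volume 0 1 := Complex.betaIntegral_convergent (by simpa) (by simpa)
  have heq : ∀ x ∈ Ioc (0:ℝ) 1,
      ((fun x : ℝ => (x:ℂ) ^ ((s:ℂ)-1) * ((1:ℂ)-x) ^ ((t:ℂ)-1)) x)
        = ((x ^ (s-1) * (1-x) ^ (t-1) : ℝ) : ℂ) := by
    intro x hx
    have h1 : ((x ^ (s-1) : ℝ) : ℂ) = (x:ℂ) ^ ((s:ℂ)-1) := by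
      rw [Complex.ofReal_cpow hx.1.le]; push_cast; ring_nf
    have h2 : (((1-x) ^ (t-1) : ℝ) : ℂ) = ((1:ℂ)-x) ^ ((t:ℂ)-1) := by
      rw [Complex.ofReal_cpow (by linarith [hx.2])]; push_cast; ring_nf
    push_cast [← h1, ← h2]
    ring
  have hCIoc : IntegrableOn (fun x : ℝ => (x:ℂ) ^ ((s:ℂ)-1) * ((1:ℂ)-x) ^ ((t:ℂ)-1))
      (Ioc 0 1) := (intervalIntegrable_iff_integrableOn_Ioc_of_le one_pos.le).mp hC
  have hRIoc : IntegrableOn (fun x : ℝ => x ^ (s-1) * (1-x) ^ (t-1)) (Ioc 0 1) := by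
    refine IntegrableOn.congr_fun hCIoc.re (fun x hx => ?_) measurableSet_Ioc
    rw [show ((x:ℂ) ^ ((s:ℂ)-1) * ((1:ℂ)-x) ^ ((t:ℂ)-1)) = ((x ^ (s-1) * (1-x) ^ (t-1) : ℝ) : ℂ) from heq x hx]; simp
  constructor
  · exact hRIoc.mono_set Ioo_subset_Ioc_self
  · have hval : Complex.betaIntegral s t
        = ((∫ x in Ioo (0:ℝ) 1, x ^ (s-1) * (1-x) ^ (t-1) : ℝ) : ℂ) := by
      rw [Complex.betaIntegral]
      rw [intervalIntegral.integral_of_le one_pos.le]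
      rw [setIntegral_congr_fun measurableSet_Ioc heq]
      rw [integral_Ioc_eq_integral_Ioo]
      exact integral_ofReal
    have hG := Complex.Gamma_mul_Gamma_eq_betaIntegral
      (s := (s:ℂ)) (t := (t:ℂ)) (by simpa) (by simpa)
    rw [hval] at hG
    have : ((Gamma s * Gamma t : ℝ) : ℂ)
        = ((Gamma (s+t) * ∫ x in Ioo (0:ℝ) 1, x ^ (s-1) * (1-x) ^ (t-1) : ℝ) : ℂ) := by
      push_cast [← Complex.Gamma_ofReal]
      simpa using hG
    have h2 := Complex.ofReal_inj.mp this
    have h3 : Gamma (s+t) ≠ 0 := (Gamma_pos_of_pos (by linarith)).ne'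
    field_simp
    linarith [h2]


lemma beta_scaled {a s t : ℝ} (ha : 0 < a) (hs : 0 < s) (ht : 0 < t) :
    IntegrableOn (fun x : ℝ => x ^ (s-1) * (a-x) ^ (t-1)) (Ioo 0 a) ∧
    ∫ x in Ioo (0:ℝ) a, x ^ (s-1) * (a-x) ^ (t-1)
      = a ^ (s+t-1) * (Gamma s * Gamma t / Gamma (s+t)) := by
  obtain ⟨hint, hval⟩ := beta_real hs ht
  have key : ∀ x ∈ Ioo (0:ℝ) a,
      x ^ (s-1) * (a-x) ^ (t-1)
        = a ^ (s+t-2) * ((a⁻¹*x) ^ (s-1) * (1-(a⁻¹*x)) ^ (t-1)) := by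
    intro x hx
    have hx0 : 0 ≤ x := hx.1.le
    have h1 : (a⁻¹*x) ^ (s-1) = a⁻¹ ^ (s-1) * x ^ (s-1) :=
      Real.mul_rpow (by positivity) hx0
    have h2 : (1-(a⁻¹*x)) ^ (t-1) = a⁻¹ ^ (t-1) * (a-x) ^ (t-1) := by
      have h : 1 - a⁻¹ * x = a⁻¹ * (a - x) := by field_simp
      rw [h, Real.mul_rpow (by positivity) (by nlinarith [hx.2])]
    have h3 : a⁻¹ ^ (s-1) = a ^ (1-s) := by
      rw [Real.inv_rpow ha.le, ← Real.rpow_neg ha.le]; ring_nf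
    have h4 : a⁻¹ ^ (t-1) = a ^ (1-t) := by
      rw [Real.inv_rpow ha.le, ← Real.rpow_neg ha.le]; ring_nf
    rw [h1, h2, h3, h4]
    rw [show a ^ (s+t-2) * (a ^ (1-s) * x ^ (s-1) * (a ^ (1-t) * (a-x) ^ (t-1)))
        = (a ^ (s+t-2) * a ^ (1-s) * a ^ (1-t)) * (x ^ (s-1) * (a-x) ^ (t-1)) from by ring,
      ← Real.rpow_add ha, ← Real.rpow_add ha,
      show s+t-2+(1-s)+(1-t) = 0 from by ring, Real.rpow_zero, one_mul]
  have hmem : ∀ x : ℝ, a⁻¹ * x ∈ Ioo (0:ℝ) 1 ↔ x ∈ Ioo 0 a := by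
    intro x
    simp only [Set.mem_Ioo]
    constructor
    · rintro ⟨h1, h2⟩
      rw [inv_mul_lt_iff₀ ha, mul_one] at h2
      constructor
      · nlinarith [inv_pos.mpr ha]
      · exact h2
    · rintro ⟨h1, h2⟩
      refine ⟨by positivity, ?_⟩
      rw [inv_mul_lt_iff₀ ha, mul_one]; exact h2
  have hcomp : IntegrableOn (fun x : ℝ => (a⁻¹*x) ^ (s-1) * (1-(a⁻¹*x)) ^ (t-1)) (Ioo 0 a) := by
    have hg : Integrable ((Ioo (0:ℝ) 1).indicator (fun x => x ^ (s-1) * (1-x) ^ (t-1))) :=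
      (integrable_indicator_iff measurableSet_Ioo).mpr hint
    have h2 := (integrable_comp_mul_left_iff
      ((Ioo (0:ℝ) 1).indicator (fun x => x ^ (s-1) * (1-x) ^ (t-1)))
      (inv_ne_zero ha.ne')).mpr hg
    have h3 : (fun x : ℝ => ((Ioo (0:ℝ) 1).indicator
        (fun x => x ^ (s-1) * (1-x) ^ (t-1))) (a⁻¹ * x))
        = (Ioo (0:ℝ) a).indicator (fun x => (a⁻¹*x) ^ (s-1) * (1-(a⁻¹*x)) ^ (t-1)) := by
      funext x
      by_cases hx : x ∈ Ioo (0:ℝ) a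
      · rw [Set.indicator_of_mem ((hmem x).mpr hx), Set.indicator_of_mem hx]
      · rw [Set.indicator_of_notMem (fun h => hx ((hmem x).mp h)),
          Set.indicator_of_notMem hx]
    rw [h3] at h2
    exact (integrable_indicator_iff measurableSet_Ioo).mp h2
  constructor
  · refine IntegrableOn.congr_fun (hcomp.const_mul (a ^ (s+t-2))) ?_ measurableSet_Ioo
    intro x hx
    exact (key x hx).symm
  · rw [setIntegral_congr_fun measurableSet_Ioo key, integral_const_mul]
    rw [← integral_Ioc_eq_integral_Ioo, ← intervalIntegral.integral_of_le ha.le]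
    rw [intervalIntegral.integral_comp_mul_left
      (fun x => x ^ (s-1) * (1-x) ^ (t-1)) (inv_ne_zero ha.ne')]
    rw [mul_zero, inv_mul_cancel₀ ha.ne', inv_inv, intervalIntegral.integral_of_le zero_le_one,
      integral_Ioc_eq_integral_Ioo, hval, smul_eq_mul]
    rw [← mul_assoc, show a ^ (s+t-2) * a = a ^ (s+t-2) * a ^ (1:ℝ) from by rw [Real.rpow_one],
      ← Real.rpow_add ha]
    ring_nf


noncomputable def GG (n : ℕ) (y : Fin (n+1) → ℝ) : ℝ :=
  (1 - y 0) ^ (-(1/2) : ℝ) * ∏ i : Fin n, (y i.castSucc - y i.succ) ^ (-(1/2) : ℝ)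

noncomputable def FF (n : ℕ) (b : ℝ) (y : Fin (n+1) → ℝ) : ℝ :=
  GG n y * y (Fin.last n) ^ (b - 1)

def SS (n : ℕ) : Set (Fin (n+1) → ℝ) :=
  {r | (∀ i j, i < j → r j < r i) ∧ 0 < r (Fin.last n) ∧ r 0 < 1}

lemma measurable_GG (n : ℕ) : Measurable (GG n) := by
  unfold GG; fun_prop

lemma measurable_FF (n : ℕ) (b : ℝ) : Measurable (FF n b) := by
  unfold FF GG; fun_prop

lemma measurableSet_SS (n : ℕ) : MeasurableSet (SS n) := by
  have h1 : MeasurableSet {r : Fin (n+1) → ℝ | ∀ i j, i < j → r j < r i} := by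
    have : {r : Fin (n+1) → ℝ | ∀ i j, i < j → r j < r i}
        = ⋂ i, ⋂ j, {r : Fin (n+1) → ℝ | i < j → r j < r i} := by
      ext r; simp [Set.mem_iInter]
    rw [this]
    refine MeasurableSet.iInter fun i => MeasurableSet.iInter fun j => ?_
    by_cases h : i < j
    · have : {r : Fin (n+1) → ℝ | i < j → r j < r i} = {r | r j < r i} := by
        ext r; simp [h]
      rw [this]
      exact measurableSet_lt (measurable_pi_apply j) (measurable_pi_apply i)
    · have : {r : Fin (n+1) → ℝ | i < j → r j < r i} = univ := by
        ext r; simp [h]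
      rw [this]; exact MeasurableSet.univ
  exact h1.inter ((measurableSet_lt measurable_const (measurable_pi_apply _)).inter
    (measurableSet_lt (measurable_pi_apply _) measurable_const))

lemma FF_pos {n : ℕ} {b : ℝ} {y : Fin (n+1) → ℝ} (hy : y ∈ SS n) : 0 < FF n b y := by
  obtain ⟨hanti, hpos, hlt⟩ := hy
  have h0 : 0 < y 0 := by
    rcases eq_or_lt_of_le (Fin.zero_le (Fin.last n)) with h | h
    · rwa [← h] at hpos
    · exact lt_trans hpos (hanti 0 (Fin.last n) h)
  refine mul_pos (mul_pos ?_ ?_) ?_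
  · exact Real.rpow_pos_of_pos (by linarith) _
  · exact Finset.prod_pos fun i _ => Real.rpow_pos_of_pos
      (sub_pos.mpr (hanti i.castSucc i.succ Fin.castSucc_lt_succ)) _
  · exact Real.rpow_pos_of_pos hpos _

-- snoc factorization
lemma FF_snoc (n : ℕ) (b : ℝ) (y : Fin (n+1) → ℝ) (x : ℝ) :
    FF (n+1) b (Fin.snoc y x) =
      GG n y * ((y (Fin.last n) - x) ^ (-(1/2) : ℝ) * x ^ (b-1)) := by
  unfold FF GG
  rw [Fin.prod_univ_castSucc]
  have h0 : (Fin.snoc y x : Fin (n+2) → ℝ) 0 = y 0 := by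
    rw [show (0 : Fin (n+2)) = Fin.castSucc 0 from rfl, Fin.snoc_castSucc]
  have hlast : (Fin.snoc y x : Fin (n+2) → ℝ) (Fin.last (n+1)) = x := by simp
  have hterm : ∀ i : Fin n,
      (Fin.snoc y x : Fin (n+2) → ℝ) ((i.castSucc : Fin (n+1)).castSucc)
          - (Fin.snoc y x : Fin (n+2) → ℝ) ((i.castSucc : Fin (n+1)).succ)
        = y i.castSucc - y i.succ := by
    intro i
    rw [Fin.snoc_castSucc, Fin.succ_castSucc, Fin.snoc_castSucc]
  have hlastterm :
      (Fin.snoc y x : Fin (n+2) → ℝ) ((Fin.last n).castSucc)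
          - (Fin.snoc y x : Fin (n+2) → ℝ) ((Fin.last n).succ)
        = y (Fin.last n) - x := by
    rw [Fin.snoc_castSucc, Fin.succ_last, Fin.snoc_last]
  rw [h0, hlast, hlastterm]
  rw [Finset.prod_congr rfl (fun i _ => by rw [hterm i])]
  ring

noncomputable def EE (n : ℕ) : (Fin (n+2) → ℝ) ≃ᵐ ℝ × (Fin (n+1) → ℝ) :=
  MeasurableEquiv.piFinSuccAbove (fun _ : Fin (n+2) => ℝ) (Fin.last (n+1))

lemma EE_symm_apply (n : ℕ) (p : ℝ × (Fin (n+1) → ℝ)) :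
    (EE n).symm p = Fin.snoc p.2 p.1 := by
  simp only [EE, MeasurableEquiv.piFinSuccAbove_symm_apply]
  exact Fin.insertNth_last' p.1 p.2

lemma preimage_SS (n : ℕ) :
    (EE n).symm ⁻¹' SS (n+1)
      = {p : ℝ × (Fin (n+1) → ℝ) | p.2 ∈ SS n ∧ p.1 ∈ Ioo 0 (p.2 (Fin.last n))} := by
  ext ⟨x, y⟩
  simp only [Set.mem_preimage, EE_symm_apply]
  constructor
  · rintro ⟨hanti, hpos, hlt⟩
    have hxy : x < y (Fin.last n) := by
      have := hanti (Fin.last n).castSucc (Fin.last (n+1)) (Fin.castSucc_lt_last _)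
      rwa [Fin.snoc_last, Fin.snoc_castSucc] at this
    rw [Fin.snoc_last] at hpos
    refine ⟨⟨fun i j hij => ?_, lt_trans hpos hxy, ?_⟩, hpos, hxy⟩
    · have := hanti i.castSucc j.castSucc (Fin.castSucc_lt_castSucc_iff.mpr hij)
      rwa [Fin.snoc_castSucc, Fin.snoc_castSucc] at this
    · rwa [show (0 : Fin (n+2)) = Fin.castSucc 0 from rfl, Fin.snoc_castSucc] at hlt
  · rintro ⟨⟨hanti, hpos, hlt⟩, hx0, hxy⟩
    have hylast : ∀ i : Fin (n+1), y (Fin.last n) ≤ y i := by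
      intro i
      rcases eq_or_lt_of_le (Fin.le_last i) with h | h
      · rw [h]
      · exact (hanti i (Fin.last n) h).le
    refine ⟨fun i j hij => ?_, ?_, ?_⟩
    · rcases Fin.eq_castSucc_or_eq_last j with ⟨j', rfl⟩ | rfl
      · have hine : i ≠ Fin.last (n+1) := by
          intro h; rw [h] at hij
          exact absurd hij (not_lt.mpr (Fin.le_last _))
        obtain ⟨i', rfl⟩ := (Fin.eq_castSucc_or_eq_last i).resolve_right hine
        rw [Fin.snoc_castSucc, Fin.snoc_castSucc]
        exact hanti i' j' (Fin.castSucc_lt_castSucc_iff.mp hij)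
      · have hine : i ≠ Fin.last (n+1) := ne_of_lt hij
        obtain ⟨i', rfl⟩ := (Fin.eq_castSucc_or_eq_last i).resolve_right hine
        rw [Fin.snoc_castSucc, Fin.snoc_last]
        exact lt_of_lt_of_le hxy (hylast i')
    · rw [Fin.snoc_last]; exact hx0
    · rw [show (0 : Fin (n+2)) = Fin.castSucc 0 from rfl, Fin.snoc_castSucc]; exact hlt

lemma base_case (b : ℝ) (hb : 0 < b) :
    IntegrableOn (FF 0 b) (SS 0) volume ∧
    ∫ r in SS 0, FF 0 b r = Gamma (1/2) ^ (0+1) * Gamma b / Gamma ((0+1)/2 + b) := by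
  have MP : MeasurePreserving (MeasurableEquiv.funUnique (Fin 1) ℝ).symm volume volume :=
    (volume_preserving_funUnique (Fin 1) ℝ).symm
  have hemb := (MeasurableEquiv.funUnique (Fin 1) ℝ).symm.measurableEmbedding
  have hpre : (MeasurableEquiv.funUnique (Fin 1) ℝ).symm ⁻¹' SS 0 = Ioo (0:ℝ) 1 := by
    ext x
    simp only [Set.mem_preimage, SS, Set.mem_setOf_eq, Set.mem_Ioo]
    constructor
    · rintro ⟨-, h1, h2⟩; exact ⟨h1, h2⟩
    · rintro ⟨h1, h2⟩
      exact ⟨fun i j hij => absurd hij (by omega), h1, h2⟩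
  have happ : ∀ x : ℝ, FF 0 b ((MeasurableEquiv.funUnique (Fin 1) ℝ).symm x)
      = x ^ (b-1) * (1-x) ^ ((1/2:ℝ)-1) := by
    intro x
    unfold FF GG
    simp only [Finset.univ_eq_empty, Finset.prod_empty, mul_one]
    show (1 - x) ^ (-(1/2):ℝ) * x ^ (b-1) = _
    rw [show ((1/2:ℝ)-1) = -(1/2) from by norm_num]
    ring
  constructor
  · rw [← MP.integrableOn_comp_preimage hemb, hpre]
    exact IntegrableOn.congr_fun (beta_real hb one_half_pos).1
      (fun x _ => (happ x).symm) measurableSet_Ioo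
  · rw [← MP.setIntegral_preimage_emb hemb, hpre]
    rw [setIntegral_congr_fun measurableSet_Ioo (fun x _ => happ x)]
    have := (beta_real hb one_half_pos).2
    rw [this, pow_one, show (0+1:ℝ)/2 + b = b + 1/2 from by ring]
    ring

lemma step_case' (n : ℕ) (b : ℝ) (hb : 0 < b)
    (ihInt : IntegrableOn (FF n (b + 1/2)) (SS n) volume)
    (ihVal : ∫ r in SS n, FF n (b + 1/2) r
      = Gamma (1/2) ^ (n+1) * Gamma (b + 1/2) / Gamma (((n:ℝ)+1)/2 + (b + 1/2))) :
    IntegrableOn (FF (n+1) b) (SS (n+1)) volume ∧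
    ∫ r in SS (n+1), FF (n+1) b r
      = Gamma (1/2) ^ (n+2) * Gamma b / Gamma (((n:ℝ)+2)/2 + b) := by
  classical
  set C : ℝ := Gamma b * Gamma (1/2) / Gamma (b + 1/2) with hC
  have MP : MeasurePreserving ((EE n).symm) volume volume :=
    (volume_preserving_piFinSuccAbove (fun _ : Fin (n+2) => ℝ) (Fin.last (n+1))).symm
  have hemb := (EE n).symm.measurableEmbedding
  set T := (EE n).symm ⁻¹' SS (n+1) with hT
  have hTdesc : T = {p : ℝ × (Fin (n+1) → ℝ) | p.2 ∈ SS n ∧ p.1 ∈ Ioo 0 (p.2 (Fin.last n))} :=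
    preimage_SS n
  have hTmeas : MeasurableSet T := (EE n).symm.measurable (measurableSet_SS (n+1))
  set g : ℝ × (Fin (n+1) → ℝ) → ℝ := fun p => FF (n+1) b ((EE n).symm p) with hgdef
  have hgmeas : Measurable g := (measurable_FF _ _).comp (EE n).symm.measurable
  have hgeq : ∀ p : ℝ × (Fin (n+1) → ℝ),
      g p = GG n p.2 * ((p.2 (Fin.last n) - p.1) ^ (-(1/2) : ℝ) * p.1 ^ (b-1)) := by
    intro p; rw [hgdef]; simp only; rw [EE_symm_apply, FF_snoc]
  set f := T.indicator g with hfdef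
  have hfmeas : Measurable f := hgmeas.indicator hTmeas
  -- sections
  have hsec : ∀ y : Fin (n+1) → ℝ, (fun x => f (x, y)) =
      if y ∈ SS n then
        (Ioo 0 (y (Fin.last n))).indicator
          (fun x => GG n y * ((y (Fin.last n) - x) ^ (-(1/2) : ℝ) * x ^ (b-1)))
      else 0 := by
    intro y
    by_cases hy : y ∈ SS n
    · rw [if_pos hy]
      funext x
      rw [hfdef]
      by_cases hx : x ∈ Ioo 0 (y (Fin.last n))
      · rw [Set.indicator_of_mem hx, Set.indicator_of_mem (by rw [hTdesc]; exact ⟨hy, hx⟩),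
          hgeq]
      · rw [Set.indicator_of_notMem hx, Set.indicator_of_notMem
          (by rw [hTdesc]; exact fun h => hx h.2)]
    · rw [if_neg hy]
      funext x
      rw [hfdef]
      rw [Set.indicator_of_notMem (by rw [hTdesc]; exact fun h => hy h.1)]
      rfl
  have hinnerInt : ∀ y : Fin (n+1) → ℝ, Integrable (fun x => f (x, y)) volume := by
    intro y
    rw [hsec y]
    by_cases hy : y ∈ SS n
    · rw [if_pos hy]
      rw [integrable_indicator_iff measurableSet_Ioo]
      have ha : 0 < y (Fin.last n) := hy.2.1
      refine IntegrableOn.congr_fun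
        (((beta_scaled ha hb one_half_pos).1).const_mul (GG n y)) ?_ measurableSet_Ioo
      intro x hx
      rw [show (1/2:ℝ)-1 = -(1/2) from by norm_num]
      ring
    · rw [if_neg hy]; exact integrable_zero _ _ _
  have hfnonneg : ∀ p, 0 ≤ f p := by
    intro p
    rw [hfdef]
    by_cases hp : p ∈ T
    · rw [Set.indicator_of_mem hp, hgdef]
      exact (FF_pos (Set.mem_preimage.mp hp)).le
    · rw [Set.indicator_of_notMem hp]
  have hinnerVal : ∀ y : Fin (n+1) → ℝ,
      (∫ x, f (x, y)) = (SS n).indicator (fun y => C * FF n (b + 1/2) y) y := by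
    intro y
    rw [hsec y]
    by_cases hy : y ∈ SS n
    · rw [if_pos hy, Set.indicator_of_mem hy]
      have ha : 0 < y (Fin.last n) := hy.2.1
      rw [integral_indicator measurableSet_Ioo]
      rw [setIntegral_congr_fun measurableSet_Ioo
        (g := fun x => GG n y * (x ^ (b-1) * (y (Fin.last n) - x) ^ ((1/2:ℝ)-1)))
        (fun x _ => by rw [show (1/2:ℝ)-1 = -(1/2) from by norm_num]; ring)]
      rw [integral_const_mul, (beta_scaled ha hb one_half_pos).2]
      show GG n y * (y (Fin.last n) ^ (b + 1/2 - 1) * (Gamma b * Gamma (1/2) / Gamma (b + 1/2)))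
        = C * FF n (b + 1/2) y
      rw [FF, hC]; ring
    · rw [if_neg hy, Set.indicator_of_notMem hy]
      simp
  -- integrability over the product
  have hfInt : Integrable f ((volume : Measure ℝ).prod (volume : Measure (Fin (n+1) → ℝ))) := by
    refine (integrable_prod_iff' hfmeas.aestronglyMeasurable).mpr ⟨?_, ?_⟩
    · exact Filter.Eventually.of_forall hinnerInt
    · have : (fun y => ∫ x, ‖f (x, y)‖) =
          (SS n).indicator (fun y => C * FF n (b + 1/2) y) := by
      -- ‖f‖ = f
        funext y
        rw [← hinnerVal y]
        congr 1
        funext x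
        exact Real.norm_of_nonneg (hfnonneg (x, y))
      rw [this]
      rw [integrable_indicator_iff (measurableSet_SS n)]
      exact ihInt.const_mul C
  constructor
  · rw [← MP.integrableOn_comp_preimage hemb]
    show IntegrableOn g T volume
    refine (integrable_indicator_iff hTmeas).mp ?_
    rw [← hfdef, Measure.volume_eq_prod]
    exact hfInt
  · rw [← MP.setIntegral_preimage_emb hemb, ← hT]
    show ∫ p in T, g p = _
    rw [← integral_indicator hTmeas, ← hfdef, Measure.volume_eq_prod]
    rw [integral_prod_symm f hfInt]
    simp only [hinnerVal]
    rw [integral_indicator (measurableSet_SS n), integral_const_mul, ihVal]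
    have hne : Gamma (b + 1/2) ≠ 0 := (Gamma_pos_of_pos (by linarith)).ne'
    have harg : ((n:ℝ)+1)/2 + (b + 1/2) = ((n:ℝ)+2)/2 + b := by ring
    rw [hC, harg]
    have h2 : Gamma (1/2) ^ (n+2) = Gamma (1/2) ^ (n+1) * Gamma (1/2) := by ring
    rw [h2]
    field_simp

lemma key_induction : ∀ n : ℕ, ∀ b : ℝ, 0 < b →
    IntegrableOn (FF n b) (SS n) volume ∧
    ∫ r in SS n, FF n b r = Gamma (1/2) ^ (n+1) * Gamma b / Gamma (((n:ℝ)+1)/2 + b) := by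
  intro n
  induction n with
  | zero =>
    intro b hb
    obtain ⟨h1, h2⟩ := base_case b hb
    refine ⟨h1, ?_⟩
    rw [h2]
    try norm_num
  | succ n ih =>
    intro b hb
    obtain ⟨ihInt, ihVal⟩ := ih (b + 1/2) (by linarith)
    obtain ⟨h1, h2⟩ := step_case' n b hb ihInt ihVal
    refine ⟨h1, ?_⟩
    rw [h2]
    have h3 : ((n:ℝ)+2)/2 + b = ((((n+1):ℕ):ℝ)+1)/2 + b := by push_cast; ring
    rw [h3]

theorem stmt_3 (n : ℕ) (hn : 1 ≤ n) :
    (∫ r : Fin n → ℝ in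
        {r | (∀ i j : Fin n, i < j → r j < r i) ∧ 0 < r ⟨n - 1, by omega⟩ ∧ r ⟨0, by omega⟩ < 1},
        (Real.sqrt ((1 - r ⟨0, by omega⟩) *
          (∏ i ∈ Finset.range (n - 1),
            (r ⟨i % n, Nat.mod_lt _ (by omega)⟩ - r ⟨(i + 1) % n, Nat.mod_lt _ (by omega)⟩)) *
          r ⟨n - 1, by omega⟩))⁻¹)
      = Real.Gamma (1/2) ^ (n + 1) / Real.Gamma ((n + 1) / 2) := by
  obtain ⟨m, rfl⟩ : ∃ m, n = m + 1 := ⟨n - 1, (Nat.succ_pred_eq_of_pos hn).symm⟩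
  have hlast : (⟨m + 1 - 1, by omega⟩ : Fin (m+1)) = Fin.last m := rfl
  have h00 : (⟨0, by omega⟩ : Fin (m+1)) = 0 := rfl
  have hset : {r : Fin (m+1) → ℝ | (∀ i j : Fin (m+1), i < j → r j < r i) ∧
      0 < r ⟨m + 1 - 1, by omega⟩ ∧ r ⟨0, by omega⟩ < 1} = SS m := by
    rw [hlast, h00]; rfl
  rw [hset]
  have hcongr : ∀ r ∈ SS m,
      (Real.sqrt ((1 - r ⟨0, by omega⟩) *
          (∏ i ∈ Finset.range (m + 1 - 1),
            (r ⟨i % (m+1), Nat.mod_lt _ (by omega)⟩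
              - r ⟨(i + 1) % (m+1), Nat.mod_lt _ (by omega)⟩)) *
          r ⟨m + 1 - 1, by omega⟩))⁻¹ = FF m (1/2) r := by
    intro r hr
    obtain ⟨hanti, hpos, hlt⟩ := hr
    rw [hlast, h00]
    have hprodeq : (∏ i ∈ Finset.range (m + 1 - 1),
          (r ⟨i % (m+1), Nat.mod_lt _ (by omega)⟩
            - r ⟨(i + 1) % (m+1), Nat.mod_lt _ (by omega)⟩))
        = ∏ i : Fin m, (r i.castSucc - r i.succ) := by
      simp only [Nat.add_sub_cancel]
      rw [← Fin.prod_univ_eq_prod_range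
        (fun k => r ⟨k % (m+1), Nat.mod_lt _ (by omega)⟩
          - r ⟨(k + 1) % (m+1), Nat.mod_lt _ (by omega)⟩) m]
      refine Finset.prod_congr rfl fun i _ => ?_
      have e1 : (⟨(i:ℕ) % (m+1), Nat.mod_lt _ (by omega)⟩ : Fin (m+1)) = i.castSucc := by
        apply Fin.ext
        simp [Nat.mod_eq_of_lt (by omega : (i:ℕ) < m + 1)]
      have e2 : (⟨((i:ℕ) + 1) % (m+1), Nat.mod_lt _ (by omega)⟩ : Fin (m+1)) = i.succ := by
        apply Fin.ext
        simp [Nat.mod_eq_of_lt (by omega : (i:ℕ) + 1 < m + 1)]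
      rw [e1, e2]
    rw [hprodeq]
    -- positivity facts
    have hA : 0 < 1 - r 0 := by linarith [hlt]
    have hprodpos : ∀ i : Fin m, 0 < r i.castSucc - r i.succ :=
      fun i => sub_pos.mpr (hanti i.castSucc i.succ Fin.castSucc_lt_succ)
    have hP : 0 < ∏ i : Fin m, (r i.castSucc - r i.succ) :=
      Finset.prod_pos fun i _ => hprodpos i
    have hc : 0 < r (Fin.last m) := hpos
    have hx : (0:ℝ) < (1 - r 0) * (∏ i : Fin m, (r i.castSucc - r i.succ)) * r (Fin.last m) :=
      mul_pos (mul_pos hA hP) hc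
    rw [Real.sqrt_eq_rpow, ← Real.rpow_neg hx.le]
    rw [Real.mul_rpow (mul_pos hA hP).le hc.le, Real.mul_rpow hA.le hP.le]
    rw [← Real.finset_prod_rpow _ _ (fun i _ => (hprodpos i).le)]
    unfold FF GG
    rw [show (1/2:ℝ)-1 = -(1/2) from by norm_num]
    try ring
  rw [setIntegral_congr_fun (measurableSet_SS m) hcongr]
  rw [(key_induction m (1/2) one_half_pos).2]
  have harg : ((m:ℝ)+1)/2 + 1/2 = ((((m+1):ℕ):ℝ)+1)/2 := by push_cast; ring
  rw [harg, show Gamma (1/2) ^ (m+1) * Gamma (1/2) = Gamma (1/2) ^ (m+1+1) from by ring]
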